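/- In the positive braid monoid, suppose a_j = σ_{i_j−1+j}⋯σ_j ≠ e and a_{j+1} = σ_{i_{j+1}+j}⋯σ_{j+1} with i_{j+1} ≥ i_j ≥ 1. Then a_{j+1}σ_j = ā_j a_j where ā_j = σ_{i_{j+1}+j}⋯σ_{i_j+j} has length at least 1, and ā_j letterwise commutes with every generator of index at most i_{j−1}+j−2. -/

import Mathlib

/-!
Both sides of the identity spell the descending word `σ_{i₁+j} ⋯ σ_j`, cut at different places.
The factor `ā_j = σ_{i₁+j} ⋯ σ_{i₀+j}` only involves generators of index at least `i₀ + j`,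
hence at distance at least two from any `σ_l` with `l ≤ i_{j-1} + j - 2`, and those commute.
-/

namespace ArtinStmt

/-- The alternating word π(s,t;k) = stst... of length k in the free monoid. -/
def altWord {S : Type*} (s t : S) : ℕ → FreeMonoid S
  | 0 => 1
  | n + 1 => FreeMonoid.of s * altWord t s n

/-- The braid/Artin relations coming from a Coxeter-type matrix `M`
(with `M s t = 0` encoding `∞`, i.e. no relation). -/
def artinRel {S : Type*} (M : S → S → ℕ) (x y : FreeMonoid S) : Prop :=
  ∃ s t, s ≠ t ∧ M s t ≠ 0 ∧ x = altWord s t (M s t) ∧ y = altWord t s (M s t)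

/-- The congruence on the free monoid generated by the Artin relations. -/
def artinCon {S : Type*} (M : S → S → ℕ) : Con (FreeMonoid S) := conGen (artinRel M)

/-- The Artin monoid associated to the matrix `M`. -/
abbrev ArtinMonoid {S : Type*} (M : S → S → ℕ) := (artinCon M).Quotient

/-- The generator σ_s of the Artin monoid. -/
def gen {S : Type*} (M : S → S → ℕ) (s : S) : ArtinMonoid M := (artinCon M).mk' (FreeMonoid.of s)

/-- Right-divisibility: `a ⪯R b` iff `b = c * a` for some `c`. -/
def RDvd {A : Type*} [Monoid A] (a b : A) : Prop := ∃ c, b = c * a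

/-- The Coxeter matrix of type A: m(i,j) = 3 for adjacent indices, 2 otherwise. -/
def braidM : ℕ → ℕ → ℕ := fun i j =>
  if i = j then 1 else if i + 1 = j ∨ j + 1 = i then 3 else 2

/-- The positive braid monoid (type A Artin monoid). -/
abbrev BraidMonoid := ArtinMonoid braidM

/-- The braid generator σ_i. -/
def bσ (i : ℕ) : BraidMonoid := gen braidM i

/-- The descending product σ_k σ_{k-1} ⋯ σ_j (equal to 1 if k < j). -/
def bdesc (k j : ℕ) : BraidMonoid := ((List.range' j (k + 1 - j)).reverse.map bσ).prod

theorem commute_gen_of_eq_two {S : Type*} {M : S → S → ℕ} {s t : S} (hst : s ≠ t)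
    (hM : M s t = 2) : Commute (gen M s) (gen M t) := by
  have hrel : artinRel M (altWord s t 2) (altWord t s 2) :=
    ⟨s, t, hst, by omega, by rw [hM], by rw [hM]⟩
  simpa [Commute, SemiconjBy, altWord, gen] using (artinCon M).eq.2 (ConGen.Rel.of _ _ hrel)

theorem mk'_ofList {S : Type*} (M : S → S → ℕ) (l : List S) :
    (artinCon M).mk' (FreeMonoid.ofList l) = (l.map (gen M)).prod := by
  induction l with
  | nil => rfl
  | cons a l ih => rw [FreeMonoid.ofList_cons, map_mul, ih]; rfl

theorem braidM_of_add_two_le {l m : ℕ} (h : l + 2 ≤ m) : braidM l m = 2 := by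
  simp only [braidM]
  rw [if_neg (by omega), if_neg (by omega)]

theorem commute_bσ_of_add_two_le {l m : ℕ} (h : l + 2 ≤ m) : Commute (bσ l) (bσ m) :=
  commute_gen_of_eq_two (by omega) (braidM_of_add_two_le h)

theorem bdesc_eq_mk' (k j : ℕ) :
    bdesc k j = (artinCon braidM).mk' (FreeMonoid.ofList (List.range' j (k + 1 - j)).reverse) :=
  (mk'_ofList braidM _).symm

theorem bdesc_self (k : ℕ) : bdesc k k = bσ k := by
  simp [bdesc]

theorem bdesc_mul_bdesc {k m j : ℕ} (hjm : j ≤ m + 1) (hmk : m ≤ k) :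
    bdesc k (m + 1) * bdesc m j = bdesc k j := by
  unfold bdesc
  have hsplit := List.range'_append_1 (s := j) (m := m + 1 - j) (n := k - m)
  rw [show j + (m + 1 - j) = m + 1 by omega, show m + 1 - j + (k - m) = k + 1 - j by omega]
    at hsplit
  rw [← List.prod_append, ← List.map_append, ← List.reverse_append,
    show k + 1 - (m + 1) = k - m by omega, hsplit]

theorem commute_bσ_bdesc {l k j : ℕ} (h : l + 2 ≤ j) : Commute (bσ l) (bdesc k j) := by
  refine Commute.list_prod_right _ _ fun x hx => ?_
  obtain ⟨y, hy, rfl⟩ := List.mem_map.1 hx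
  rw [List.mem_reverse, List.mem_range'_1] at hy
  exact commute_bσ_of_add_two_le (by omega)

/-- `im` plays the role of the paper's `i_{j−1}`. -/
theorem braid_bar_identity (j im i₀ i₁ : ℕ)
    (hj : 2 ≤ j) (h0 : 1 ≤ i₀) (h01 : i₀ ≤ i₁) (him : im ≤ i₀)
    (len : BraidMonoid → ℕ)
    (hlen : ∀ w : FreeMonoid ℕ, len ((artinCon braidM).mk' w) = w.length) :
    bdesc (i₁ + j) (j + 1) * bσ j = bdesc (i₁ + j) (i₀ + j) * bdesc (i₀ - 1 + j) j ∧
    1 ≤ len (bdesc (i₁ + j) (i₀ + j)) ∧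
    ∀ l, l ≤ im + j - 2 →
      bσ l * bdesc (i₁ + j) (i₀ + j) = bdesc (i₁ + j) (i₀ + j) * bσ l := by
  refine ⟨?_, ?_, fun l hl => (commute_bσ_bdesc (by omega)).eq⟩
  · have hi₀ : i₀ + j = i₀ - 1 + j + 1 := by omega
    rw [← bdesc_self, bdesc_mul_bdesc (by omega) (by omega), hi₀,
      bdesc_mul_bdesc (by omega) (by omega)]
  · rw [bdesc_eq_mk', hlen]
    simp only [FreeMonoid.length, FreeMonoid.toList_ofList, List.length_reverse,
      List.length_range']
    omega

end ArtinStmt
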